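/- Let H be a real Hilbert space and F : H → ℝ. Suppose F is ρ-weakly convex, i.e., x ↦ F(x) + (ρ/2)‖x‖² is convex, and let β > ρ > 0. Then for any a, b ∈ H, if x_a uniquely minimizes x ↦ F(x) + (β/2)‖x − a‖² and x_b uniquely minimizes x ↦ F(x) + (β/2)‖x − b‖², then ‖x_a − x_b‖ ≤ (β/(β − ρ)) ‖a − b‖. -/

import Mathlib

/-! With `G := F + (ρ/2)‖·‖²`, which is convex, completing the square turns the objective
`F + (β/2)‖· - a‖²` into `G + ((β - ρ)/2)‖· - c‖²` plus a constant, where `c = (β/(β - ρ)) a`.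
So `x_a` is the proximal point of the convex function `G / (β - ρ)` at `c`. Optimality makes
`(β - ρ)(c - x)` a subgradient of `G` at `x`, and monotonicity of the subdifferential makes the
proximal map of a convex function nonexpansive. Rescaling the centres gives the constant
`β/(β - ρ)`. -/

open Filter Topology RealInnerProductSpace

section

variable {H : Type*} [NormedAddCommGroup H] [InnerProductSpace ℝ H]

lemma ConvexOn.le_add_inner_add_of_forall_add_sq_le {G : H → ℝ} (hG : ConvexOn ℝ Set.univ G)
    {μ : ℝ} {c x : H} (hx : ∀ y, G x + μ / 2 * ‖x - c‖ ^ 2 ≤ G y + μ / 2 * ‖y - c‖ ^ 2)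
    (y : H) {t : ℝ} (ht₀ : 0 < t) (ht₁ : t ≤ 1) :
    G x ≤ G y + μ * ⟪x - c, y - x⟫ + t * (μ / 2 * ‖y - x‖ ^ 2) := by
  have hconv : G (x + t • (y - x)) ≤ (1 - t) * G x + t * G y := by
    have h := hG.2 (Set.mem_univ x) (Set.mem_univ y) (sub_nonneg.2 ht₁) ht₀.le (by ring)
    rwa [show (1 - t) • x + t • y = x + t • (y - x) by module] at h
  have hsq : ‖x + t • (y - x) - c‖ ^ 2
      = ‖x - c‖ ^ 2 + 2 * t * ⟪x - c, y - x⟫ + t ^ 2 * ‖y - x‖ ^ 2 := by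
    rw [show x + t • (y - x) - c = (x - c) + t • (y - x) by abel, norm_add_sq_real,
      real_inner_smul_right, norm_smul, Real.norm_of_nonneg ht₀.le]
    ring
  have hopt := hx (x + t • (y - x))
  rw [hsq] at hopt
  have : t * G x ≤ t * (G y + μ * ⟪x - c, y - x⟫ + t * (μ / 2 * ‖y - x‖ ^ 2)) := by
    linear_combination hopt + hconv
  exact le_of_mul_le_mul_left this ht₀

lemma ConvexOn.le_add_inner_of_forall_add_sq_le {G : H → ℝ} (hG : ConvexOn ℝ Set.univ G)
    {μ : ℝ} {c x : H} (hx : ∀ y, G x + μ / 2 * ‖x - c‖ ^ 2 ≤ G y + μ / 2 * ‖y - c‖ ^ 2)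
    (y : H) : G x ≤ G y + μ * ⟪x - c, y - x⟫ := by
  have hlim : Tendsto (fun t : ℝ => G y + μ * ⟪x - c, y - x⟫ + t * (μ / 2 * ‖y - x‖ ^ 2))
      (𝓝[>] 0) (𝓝 (G y + μ * ⟪x - c, y - x⟫)) := by
    have := ((continuous_mul_const (μ / 2 * ‖y - x‖ ^ 2)).const_add
      (G y + μ * ⟪x - c, y - x⟫)).tendsto 0
    simpa using this.mono_left nhdsWithin_le_nhds
  refine ge_of_tendsto hlim ?_
  filter_upwards [Ioc_mem_nhdsGT one_pos] with t ht
  exact hG.le_add_inner_add_of_forall_add_sq_le hx y ht.1 ht.2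

lemma ConvexOn.norm_sub_le_of_forall_add_sq_le {G : H → ℝ} (hG : ConvexOn ℝ Set.univ G)
    {μ : ℝ} (hμ : 0 < μ) {c c' x x' : H}
    (hx : ∀ y, G x + μ / 2 * ‖x - c‖ ^ 2 ≤ G y + μ / 2 * ‖y - c‖ ^ 2)
    (hx' : ∀ y, G x' + μ / 2 * ‖x' - c'‖ ^ 2 ≤ G y + μ / 2 * ‖y - c'‖ ^ 2) :
    ‖x - x'‖ ≤ ‖c - c'‖ := by
  have h₁ := hG.le_add_inner_of_forall_add_sq_le hx x'
  have h₂ := hG.le_add_inner_of_forall_add_sq_le hx' x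
  have hinner : ⟪x - c, x' - x⟫ + ⟪x' - c', x - x'⟫ = ⟪c - c', x - x'⟫ - ‖x - x'‖ ^ 2 := by
    rw [← real_inner_self_eq_norm_sq]
    simp only [inner_sub_left, inner_sub_right]
    ring
  have hmono : ‖x - x'‖ ^ 2 ≤ ⟪c - c', x - x'⟫ := by
    have : 0 ≤ μ * (⟪c - c', x - x'⟫ - ‖x - x'‖ ^ 2) := by linear_combination h₁ + h₂ + μ * hinner
    linarith [nonneg_of_mul_nonneg_right this hμ]
  rcases (norm_nonneg (x - x')).eq_or_lt with h₀ | h₀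
  · exact h₀ ▸ norm_nonneg _
  · refine le_of_mul_le_mul_right ?_ h₀
    calc ‖x - x'‖ * ‖x - x'‖ = ‖x - x'‖ ^ 2 := (sq _).symm
      _ ≤ ⟪c - c', x - x'⟫ := hmono
      _ ≤ ‖c - c'‖ * ‖x - x'‖ := real_inner_le_norm _ _

lemma forall_add_sq_le_of_recentre {F : H → ℝ} {ρ β : ℝ} {a c x : H} (hc : (β - ρ) • c = β • a)
    (hx : ∀ y, F x + β / 2 * ‖x - a‖ ^ 2 ≤ F y + β / 2 * ‖y - a‖ ^ 2) (y : H) :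
    F x + ρ / 2 * ‖x‖ ^ 2 + (β - ρ) / 2 * ‖x - c‖ ^ 2
      ≤ F y + ρ / 2 * ‖y‖ ^ 2 + (β - ρ) / 2 * ‖y - c‖ ^ 2 := by
  have hsplit : ∀ z : H, β / 2 * ‖z - a‖ ^ 2
      = ρ / 2 * ‖z‖ ^ 2 + (β - ρ) / 2 * ‖z - c‖ ^ 2 + (β / 2 * ‖a‖ ^ 2 - (β - ρ) / 2 * ‖c‖ ^ 2) := by
    intro z
    have hzc : (β - ρ) * ⟪z, c⟫ = β * ⟪z, a⟫ := by
      rw [← real_inner_smul_right, ← real_inner_smul_right, hc]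
    rw [norm_sub_sq_real, norm_sub_sq_real]
    linear_combination hzc
  have := hx y
  rw [hsplit x, hsplit y] at this
  linarith

end

theorem trace_weakly_convex_prox_lipschitz_general
    {H : Type*} [NormedAddCommGroup H] [InnerProductSpace ℝ H]
    (F : H → ℝ) (ρ β : ℝ) (hρ : 0 < ρ) (hβρ : ρ < β)
    (hweak : ConvexOn ℝ Set.univ (fun x => F x + ρ / 2 * ‖x‖ ^ 2))
    (a b xa xb : H)
    (hxa : ∀ y : H, F xa + β / 2 * ‖xa - a‖ ^ 2 ≤ F y + β / 2 * ‖y - a‖ ^ 2)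
    (hxb : ∀ y : H, F xb + β / 2 * ‖xb - b‖ ^ 2 ≤ F y + β / 2 * ‖y - b‖ ^ 2) :
    ‖xa - xb‖ ≤ β / (β - ρ) * ‖a - b‖ := by
  have hμ : 0 < β - ρ := sub_pos.2 hβρ
  have hcentre : ∀ v : H, (β - ρ) • ((β / (β - ρ)) • v) = β • v := fun v => by
    rw [smul_smul, mul_div_cancel₀ _ hμ.ne']
  calc ‖xa - xb‖ ≤ ‖(β / (β - ρ)) • a - (β / (β - ρ)) • b‖ :=
        hweak.norm_sub_le_of_forall_add_sq_le hμ (forall_add_sq_le_of_recentre (hcentre a) hxa)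
          (forall_add_sq_le_of_recentre (hcentre b) hxb)
    _ = β / (β - ρ) * ‖a - b‖ := by
        rw [← smul_sub, norm_smul, Real.norm_of_nonneg (div_nonneg (by linarith) hμ.le)]

/-- If F is ρ-weakly convex and β > ρ > 0, the proximal map with
parameter β is (β/(β−ρ))-Lipschitz. -/
theorem trace_weakly_convex_prox_lipschitz
    {H : Type*} [NormedAddCommGroup H] [InnerProductSpace ℝ H] [CompleteSpace H]
    (F : H → ℝ) (ρ β : ℝ) (hρ : 0 < ρ) (hβρ : ρ < β)
    (hweak : ConvexOn ℝ Set.univ (fun x => F x + ρ / 2 * ‖x‖ ^ 2))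
    (a b xa xb : H)
    (hxa : ∀ y : H, F xa + β / 2 * ‖xa - a‖ ^ 2 ≤ F y + β / 2 * ‖y - a‖ ^ 2)
    (hxa_uniq : ∀ y : H, (∀ z : H, F y + β / 2 * ‖y - a‖ ^ 2 ≤ F z + β / 2 * ‖z - a‖ ^ 2) → y = xa)
    (hxb : ∀ y : H, F xb + β / 2 * ‖xb - b‖ ^ 2 ≤ F y + β / 2 * ‖y - b‖ ^ 2)
    (hxb_uniq : ∀ y : H, (∀ z : H, F y + β / 2 * ‖y - b‖ ^ 2 ≤ F z + β / 2 * ‖z - b‖ ^ 2) → y = xb) :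
    ‖xa - xb‖ ≤ β / (β - ρ) * ‖a - b‖ :=
  trace_weakly_convex_prox_lipschitz_general F ρ β hρ hβρ hweak a b xa xb hxa hxb
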